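/- arXiv:0803.2131 — 4 statements merged into one kernel-verified Lean document; each statement's English description precedes it below -/
import Mathlib

section
/- Let σ₀ = {0} ∪ {(-1)^k/k : k = 1, 2, 3, ...}, a compact subset of ℝ, and let X = C(σ₀, ℂ) with the supremum norm. There do not exist a constant C' > 0 and a map Ψ assigning to each function f : ℝ → ℂ a bounded linear operator Ψ(f) on X such that: (i) Ψ(f+g) = Ψ(f) + Ψ(g) and Ψ(f·g) = Ψ(f)∘Ψ(g) whenever f and g are of bounded variation on σ₀; (ii) ‖Ψ(f)‖ ≤ C'·(sup_{t∈σ₀}|f(t)| + var_{σ₀}(f)) whenever f is of bounded variation on σ₀; and (iii) Ψ(f)x = (t ↦ f(t)x(t)) for every Lipschitz function f : ℝ → ℂ and every x ∈ X. -/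
/-!
Let `H` be the Heaviside step, which has bounded variation on `σ₀`. For `s ∈ σ₀ \ {0}` the
Lipschitz ramp `χ t = max (t / s) 0` satisfies `χ s = 1` and vanishes on the side of `0`
opposite to `s`, so `χ * H` is `χ` or `0`, again Lipschitz. Multiplicativity then gives
`Ψ(χ H) 1 = Ψ χ (Ψ H 1)`, and evaluating both multiplication operators at `s` yields
`(Ψ H 1)(s) = H(s)`. So the continuous function `Ψ H 1` agrees with `H` off `0`; but `σ₀`
accumulates at `0` from both sides, where `H` takes the values `1` and `0`.
-/

open MeasureTheory Filter Topology

/-- The set `σ₀ = {0} ∪ {(-1)^k/k : k ≥ 1}`. -/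
noncomputable def sigma0 : Set ℝ := {0} ∪ {t : ℝ | ∃ k : ℕ, 1 ≤ k ∧ t = (-1) ^ k / k}

lemma sigma0_eq : sigma0 = insert (0 : ℝ) (Set.range fun k : ℕ => ((-1 : ℝ)) ^ (k + 1) / (k + 1)) := by
  ext t
  simp only [sigma0, Set.mem_union, Set.mem_singleton_iff, Set.mem_setOf_eq, Set.mem_insert_iff,
    Set.mem_range]
  constructor
  · rintro (h | ⟨k, hk, rfl⟩)
    · exact Or.inl h
    · right
      refine ⟨k - 1, ?_⟩
      have hk' : k - 1 + 1 = k := Nat.succ_pred_eq_of_pos hk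
      rw [hk']
      congr 1
      exact_mod_cast congrArg (Nat.cast : ℕ → ℝ) hk'
  · rintro (h | ⟨k, rfl⟩)
    · exact Or.inl h
    · right
      exact ⟨k + 1, Nat.le_add_left 1 k, by push_cast; ring⟩

lemma sigma0_isCompact : IsCompact sigma0 := by
  rw [sigma0_eq]
  have h : Tendsto (fun k : ℕ => ((-1 : ℝ)) ^ (k + 1) / (k + 1)) atTop (𝓝 0) := by
    apply squeeze_zero_norm (a := fun k : ℕ => 1 / ((k : ℝ) + 1))
    · intro k
      rw [norm_div, norm_pow, norm_neg, norm_one, one_pow]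
      simp [Real.norm_eq_abs, abs_of_nonneg (by positivity : (0:ℝ) ≤ (k:ℝ) + 1)]
    · exact tendsto_one_div_add_atTop_nhds_zero_nat
  exact h.isCompact_insert_range

instance : CompactSpace ↥sigma0 := isCompact_iff_compactSpace.mp sigma0_isCompact

/-- The `BV(σ)` norm-type quantity `sup_{t ∈ σ} |f(t)| + var_σ(f)`. -/
noncomputable def bvNorm (σ : Set ℝ) (f : ℝ → ℂ) : ℝ :=
  sSup ((fun t => ‖f t‖) '' σ) + (eVariationOn f σ).toReal

theorem LipschitzWith.boundedVariationOn_of_isBounded {E : Type*} [PseudoEMetricSpace E]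
    {f : ℝ → E} {K : NNReal} (hf : LipschitzWith K f) {s : Set ℝ} (hs : Bornology.IsBounded s) :
    BoundedVariationOn f s := by
  obtain ⟨C, hC⟩ := hs.exists_norm_le
  exact hf.comp_boundedVariationOn ((monotone_id.monotoneOn s).boundedVariationOn hC)

noncomputable def heaviside : ℝ → ℂ := (Set.Ioi 0).indicator 1

theorem heaviside_of_pos {t : ℝ} (ht : 0 < t) : heaviside t = 1 := Set.indicator_of_mem ht _

theorem heaviside_of_nonpos {t : ℝ} (ht : t ≤ 0) : heaviside t = 0 :=
  Set.indicator_of_notMem (not_lt.2 ht) _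

theorem boundedVariationOn_heaviside (s : Set ℝ) : BoundedVariationOn heaviside s := by
  set h : ℝ → ℝ := (Set.Ioi 0).indicator 1
  have hmono : Monotone h := fun a b hab => by
    simp only [h, Set.indicator_apply, Set.mem_Ioi, Pi.one_apply]
    split_ifs <;> norm_num; linarith
  have hbdd : ∀ t ∈ s, |h t| ≤ 1 := fun t _ => by
    simp only [h, Set.indicator_apply, Pi.one_apply]
    split_ifs <;> norm_num
  have hcomp : heaviside = Complex.ofReal ∘ h := by
    ext t
    simp only [heaviside, h, Function.comp_apply, Set.indicator_apply, Pi.one_apply]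
    split_ifs <;> simp
  rw [hcomp]
  exact Complex.isometry_ofReal.lipschitz.comp_boundedVariationOn
    ((hmono.monotoneOn s).boundedVariationOn hbdd)

noncomputable def ramp (s t : ℝ) : ℂ := (max (s⁻¹ * t) 0 : ℝ)

theorem lipschitzWith_ramp (s : ℝ) : LipschitzWith ‖s⁻¹‖₊ (ramp s) := by
  have h := Complex.isometry_ofReal.lipschitz.comp ((lipschitzWith_smul s⁻¹).max_const 0)
  rwa [one_mul] at h

theorem ramp_self {s : ℝ} (hs : s ≠ 0) : ramp s s = 1 := by
  simp [ramp, hs]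

theorem ramp_mul_heaviside_of_pos {s : ℝ} (hs : 0 < s) : ramp s * heaviside = ramp s := by
  ext t
  rcases le_or_gt t 0 with ht | ht
  · simp [ramp, mul_nonpos_of_nonneg_of_nonpos (inv_nonneg.2 hs.le) ht]
  · simp [heaviside_of_pos ht]

theorem ramp_mul_heaviside_of_neg {s : ℝ} (hs : s < 0) : ramp s * heaviside = 0 := by
  ext t
  rcases le_or_gt t 0 with ht | ht
  · simp [heaviside_of_nonpos ht]
  · simp [ramp, mul_nonpos_of_nonpos_of_nonneg (inv_nonpos.2 hs.le) ht.le]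

theorem exists_lipschitzWith_ramp_mul_heaviside {s : ℝ} (hs : s ≠ 0) :
    ∃ K : NNReal, LipschitzWith K (ramp s * heaviside) := by
  rcases hs.lt_or_gt with hs | hs
  · exact ⟨0, ramp_mul_heaviside_of_neg hs ▸ LipschitzWith.const' 0⟩
  · exact ⟨_, (ramp_mul_heaviside_of_pos hs).symm ▸ lipschitzWith_ramp s⟩

section MulOperator

variable {σ : Set ℝ}

def IsMulOperator (T : C(σ, ℂ) →L[ℂ] C(σ, ℂ)) (f : ℝ → ℂ) : Prop :=
  ∀ x t, T x t = f t * x t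

theorem apply_one_eq_of_isMulOperator_comp {S T : C(σ, ℂ) →L[ℂ] C(σ, ℂ)} {f χ : ℝ → ℂ}
    (hS : IsMulOperator S χ) (hST : IsMulOperator (S.comp T) (χ * f)) {t : σ} (ht : χ t = 1) :
    T 1 t = f t :=
  calc T 1 t = χ t * T 1 t := by rw [ht, one_mul]
    _ = S (T 1) t := (hS _ _).symm
    _ = χ t * f t * 1 := hST 1 t
    _ = f t := by rw [ht, one_mul, mul_one]

end MulOperator

theorem tendsto_neg_one_pow_div_atTop :
    Tendsto (fun n : ℕ => (-1 : ℝ) ^ n / n) atTop (𝓝 0) := by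
  refine squeeze_zero_norm (fun n => ?_) tendsto_one_div_atTop_nhds_zero_nat
  simp

theorem not_forall_continuousMap_eq_heaviside (y : C(sigma0, ℂ)) :
    ¬ ∀ (s : ℝ) (hs : s ∈ sigma0), s ≠ 0 → y ⟨s, hs⟩ = heaviside s := by
  intro hy
  have hmem {n : ℕ} (hn : 1 ≤ n) : (-1 : ℝ) ^ n / n ∈ sigma0 := Or.inr ⟨n, hn, rfl⟩
  have hlim {φ : ℕ → ℕ} (hφ : StrictMono φ) (hφ1 : ∀ k, 1 ≤ φ k) :
      Tendsto (fun k => y ⟨_, hmem (hφ1 k)⟩) atTop (𝓝 (y ⟨0, Or.inl rfl⟩)) :=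
    (y.continuous.tendsto _).comp <| tendsto_subtype_rng.mpr <|
      tendsto_neg_one_pow_div_atTop.comp hφ.tendsto_atTop
  have heven (k : ℕ) : y ⟨_, hmem (by omega : 1 ≤ 2 * k + 2)⟩ = 1 := by
    have hpos : (0 : ℝ) < (-1) ^ (2 * k + 2) / ↑(2 * k + 2) := by
      rw [Even.neg_one_pow ⟨k + 1, by ring⟩]; positivity
    rw [hy _ _ hpos.ne', heaviside_of_pos hpos]
  have hodd (k : ℕ) : y ⟨_, hmem (by omega : 1 ≤ 2 * k + 1)⟩ = 0 := by
    have hneg : (-1) ^ (2 * k + 1) / ↑(2 * k + 1) < (0 : ℝ) := by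
      rw [Odd.neg_one_pow ⟨k, rfl⟩, neg_div, neg_neg_iff_pos]; positivity
    rw [hy _ _ hneg.ne, heaviside_of_nonpos hneg.le]
  have h1 := hlim (φ := fun k => 2 * k + 2) (fun a b h => by dsimp only; omega) (fun k => by omega)
  have h0 := hlim (φ := fun k => 2 * k + 1) (fun a b h => by dsimp only; omega) (fun k => by omega)
  simp only [heven, hodd] at h1 h0
  exact one_ne_zero ((tendsto_nhds_unique tendsto_const_nhds h1).trans
    (tendsto_nhds_unique tendsto_const_nhds h0).symm)

/-- On `X = C(σ₀, ℂ)` there is no `BV(σ₀)` functional calculus `Ψ`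
(additive and multiplicative on functions of bounded variation on `σ₀`, bounded by
`C'·(sup_{σ₀}|f| + var_{σ₀} f)`) which agrees with multiplication by `f` for every
Lipschitz function `f : ℝ → ℂ`. -/
theorem stmt2 :
    ¬ ∃ (C' : ℝ) (_ : 0 < C') (Ψ : (ℝ → ℂ) → C(↥sigma0, ℂ) →L[ℂ] C(↥sigma0, ℂ)),
      (∀ f g : ℝ → ℂ, BoundedVariationOn f sigma0 → BoundedVariationOn g sigma0 →
        Ψ (f + g) = Ψ f + Ψ g ∧ Ψ (f * g) = (Ψ f).comp (Ψ g)) ∧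
      (∀ f : ℝ → ℂ, BoundedVariationOn f sigma0 → ‖Ψ f‖ ≤ C' * bvNorm sigma0 f) ∧
      (∀ f : ℝ → ℂ, (∃ K : NNReal, LipschitzWith K f) →
        ∀ x : C(↥sigma0, ℂ), ∀ t : ↥sigma0, (Ψ f x) t = f t * x t) := by
  rintro ⟨-, -, Ψ, hmul, -, hlip⟩
  refine not_forall_continuousMap_eq_heaviside (Ψ heaviside 1) fun s hs hs0 => ?_
  have hramp : BoundedVariationOn (ramp s) sigma0 :=
    (lipschitzWith_ramp s).boundedVariationOn_of_isBounded sigma0_isCompact.isBounded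
  have hcomp := (hmul _ _ hramp (boundedVariationOn_heaviside sigma0)).2
  refine apply_one_eq_of_isMulOperator_comp (S := Ψ (ramp s)) (χ := ramp s)
    (hlip _ ⟨_, lipschitzWith_ramp s⟩) ?_ (t := ⟨s, hs⟩) (ramp_self hs0)
  exact hcomp ▸ hlip _ (exists_lipschitzWith_ramp_mul_heaviside hs0)
end

section
/- Let (Ω, Σ, μ) be a measure space, let 1 ≤ r < s < ∞, and let K > 0. Suppose (T_p)_{p∈(r,s)} is a consistent family of bounded operators on the complex spaces L^p(μ) with ‖T_p‖ ≤ K for all p ∈ (r,s). Then there exists a unique bounded linear operator V on L^s(μ) such that V x = T_p x (μ-almost everywhere) for every p ∈ (r,s) and every x ∈ L^s(μ) ∩ L^p(μ); moreover ‖V‖ ≤ K. -/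
/-!
On simple functions `f ∈ L^s`, which lie in every `L^p`, put `V f := T_{p₀} f` for a fixed
`p₀ ∈ (r, s)`. By consistency `V f = T_p f` for all `p ∈ (r, s)`, so `‖V f‖_p ≤ K ‖f‖_p`; letting
`p ↑ s`, Fatou's lemma on the left and dominated convergence of `∫ |f|^p` on the right give
`‖V f‖_s ≤ K ‖f‖_s`, and `V` extends by density to `L^s` with `‖V‖ ≤ K`. Consistency of `V` with
each `T_p`, and uniqueness, follow by approximating `x ∈ L^s ∩ L^p` by simple functions in both
norms at once and comparing the limits in measure.
-/

open MeasureTheory Filter Topology ENNReal Set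
open scoped NNReal

namespace ENNReal

theorem tendsto_const_rpow {ι : Type*} {l : Filter ι} {a : ι → ℝ} {b : ℝ} (hb : 0 < b)
    (ha : Tendsto a l (𝓝 b)) (t : ℝ≥0∞) : Tendsto (fun i => t ^ a i) l (𝓝 (t ^ b)) := by
  have hpos : ∀ᶠ i in l, 0 < a i := ha.eventually (lt_mem_nhds hb)
  induction t with
  | top =>
    rw [top_rpow_of_pos hb]
    exact tendsto_const_nhds.congr' (hpos.mono fun i hi => (top_rpow_of_pos hi).symm)
  | coe t =>
    rw [← coe_rpow_of_nonneg t hb.le]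
    refine (tendsto_coe.2 ?_).congr' (hpos.mono fun i hi => coe_rpow_of_nonneg t hi.le)
    exact (NNReal.continuousAt_rpow (Or.inr hb)).tendsto.comp (tendsto_const_nhds.prodMk_nhds ha)

theorem rpow_le_rpow_add_rpow {a c d : ℝ} (hca : c ≤ a) (had : a ≤ d) (t : ℝ≥0∞) :
    t ^ a ≤ t ^ c + t ^ d := by
  rcases le_total t 1 with h | h
  · exact le_add_right (rpow_le_rpow_of_exponent_ge h hca)
  · exact le_add_left (rpow_le_rpow_of_exponent_le h had)

end ENNReal

namespace MeasureTheory

variable {α : Type*} [MeasurableSpace α] {μ : Measure α}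

section ExponentLimit

variable {ι : Type*} {l : Filter ι} [l.IsCountablyGenerated] {f : α → ℝ≥0∞} {a : ι → ℝ} {b : ℝ}

theorem lintegral_rpow_le_liminf [l.NeBot] (hf : AEMeasurable f μ) (hb : 0 < b)
    (ha : Tendsto a l (𝓝 b)) :
    ∫⁻ x, f x ^ b ∂μ ≤ liminf (fun i => ∫⁻ x, f x ^ a i ∂μ) l :=
  calc ∫⁻ x, f x ^ b ∂μ = ∫⁻ x, liminf (fun i => f x ^ a i) l ∂μ :=
        lintegral_congr fun x => ((tendsto_const_rpow hb ha (f x)).liminf_eq).symm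
    _ ≤ liminf (fun i => ∫⁻ x, f x ^ a i ∂μ) l :=
        lintegral_liminf_le' fun _ => hf.pow_const _

theorem tendsto_lintegral_rpow (hf : AEMeasurable f μ) (hb : 0 < b) (ha : Tendsto a l (𝓝 b))
    {c d : ℝ} (hacd : ∀ᶠ i in l, a i ∈ Icc c d) (hc : ∫⁻ x, f x ^ c ∂μ ≠ ∞)
    (hd : ∫⁻ x, f x ^ d ∂μ ≠ ∞) :
    Tendsto (fun i => ∫⁻ x, f x ^ a i ∂μ) l (𝓝 (∫⁻ x, f x ^ b ∂μ)) := by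
  refine tendsto_lintegral_filter_of_dominated_convergence' (fun x => f x ^ c + f x ^ d)
    (Eventually.of_forall fun _ => hf.pow_const _)
    (hacd.mono fun i hi => ae_of_all _ fun x => rpow_le_rpow_add_rpow hi.1 hi.2 (f x)) ?_
    (ae_of_all _ fun x => tendsto_const_rpow hb ha (f x))
  rw [lintegral_add_left' (hf.pow_const _)]
  exact add_ne_top.2 ⟨hc, hd⟩

end ExponentLimit

variable {E F : Type*} [NormedAddCommGroup E] [NormedAddCommGroup F]

theorem eLpNorm_rpow_toReal_eq_lintegral {f : α → E} {p : ℝ≥0∞} (hp0 : p ≠ 0) (hp : p ≠ ∞) :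
    eLpNorm f p μ ^ p.toReal = ∫⁻ x, ‖f x‖ₑ ^ p.toReal ∂μ := by
  lift p to ℝ≥0 using hp
  exact eLpNorm_nnreal_pow_eq_lintegral (mod_cast hp0)

theorem eLpNorm_le_mul_of_forall_Ioo {f : α → E} {g : α → F} {r s : ℝ≥0∞} (hr : r ≠ 0)
    (hrs : r < s) (hs : s ≠ ∞) (hg : AEStronglyMeasurable g μ) (hfr : MemLp f r μ)
    (hfs : MemLp f s μ) {C : ℝ≥0∞} (hC : C ≠ ∞)
    (h : ∀ p ∈ Ioo r s, eLpNorm g p μ ≤ C * eLpNorm f p μ) :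
    eLpNorm g s μ ≤ C * eLpNorm f s μ := by
  have hs0 : s ≠ 0 := (pos_of_gt hrs).ne'
  have hrtop : r ≠ ∞ := (hrs.trans_le le_top).ne
  have hs_pos : 0 < s.toReal := toReal_pos hs0 hs
  have : NeZero s := ⟨hs0⟩
  have hIoo : ∀ᶠ p in 𝓝[<] s, p ∈ Ioo r s := Ioo_mem_nhdsLT hrs
  have hexp : Tendsto ENNReal.toReal (𝓝[<] s) (𝓝 s.toReal) :=
    (tendsto_toReal hs).mono_left nhdsWithin_le_nhds
  have hf_lim : Tendsto (fun p : ℝ≥0∞ => C ^ p.toReal * ∫⁻ x, ‖f x‖ₑ ^ p.toReal ∂μ) (𝓝[<] s)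
      (𝓝 (C ^ s.toReal * ∫⁻ x, ‖f x‖ₑ ^ s.toReal ∂μ)) := by
    have hfs_fin := (lintegral_rpow_enorm_lt_top_of_eLpNorm_lt_top hs0 hs hfs.eLpNorm_lt_top).ne
    refine ENNReal.Tendsto.mul (tendsto_const_rpow hs_pos hexp C) (Or.inr hfs_fin)
      (tendsto_lintegral_rpow (c := r.toReal) hfs.aestronglyMeasurable.enorm hs_pos hexp ?_
        (lintegral_rpow_enorm_lt_top_of_eLpNorm_lt_top hr hrtop hfr.eLpNorm_lt_top).ne hfs_fin)
      (Or.inr (rpow_ne_top_of_nonneg hs_pos.le hC))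
    exact hIoo.mono fun p hp =>
      ⟨toReal_mono (hp.2.trans_le le_top).ne hp.1.le, toReal_mono hs hp.2.le⟩
  rw [← ENNReal.rpow_le_rpow_iff hs_pos, ENNReal.mul_rpow_of_nonneg _ _ hs_pos.le,
    eLpNorm_rpow_toReal_eq_lintegral hs0 hs, eLpNorm_rpow_toReal_eq_lintegral hs0 hs]
  calc ∫⁻ x, ‖g x‖ₑ ^ s.toReal ∂μ
      ≤ liminf (fun p : ℝ≥0∞ => ∫⁻ x, ‖g x‖ₑ ^ p.toReal ∂μ) (𝓝[<] s) :=
        lintegral_rpow_le_liminf hg.enorm hs_pos hexp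
    _ ≤ liminf (fun p : ℝ≥0∞ => C ^ p.toReal * ∫⁻ x, ‖f x‖ₑ ^ p.toReal ∂μ) (𝓝[<] s) := by
        refine liminf_le_liminf (hIoo.mono fun p hp => ?_)
        have hp0 : p ≠ 0 := (pos_of_gt hp.1).ne'
        have hptop : p ≠ ∞ := (hp.2.trans_le le_top).ne
        rw [← eLpNorm_rpow_toReal_eq_lintegral hp0 hptop,
          ← eLpNorm_rpow_toReal_eq_lintegral hp0 hptop,
          ← ENNReal.mul_rpow_of_nonneg _ _ toReal_nonneg]
        exact ENNReal.rpow_le_rpow (h p hp) toReal_nonneg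
    _ = C ^ s.toReal * ∫⁻ x, ‖f x‖ₑ ^ s.toReal ∂μ := hf_lim.liminf_eq

theorem SimpleFunc.memLp_of_memLp {f : SimpleFunc α E} {s : ℝ≥0∞} (hs0 : s ≠ 0) (hs : s ≠ ∞)
    (hf : MemLp f s μ) (p : ℝ≥0∞) : MemLp f p μ :=
  SimpleFunc.memLp_of_finite_measure_preimage p ((SimpleFunc.memLp_iff hs0 hs).1 hf)

theorem MemLp.coeFn_toLp_ae_eq_toLp {f : α → E} {p q : ℝ≥0∞}
    (hfp : MemLp f p μ) (hfq : MemLp f q μ) : hfp.toLp f =ᵐ[μ] hfq.toLp f :=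
  hfp.coeFn_toLp.trans hfq.coeFn_toLp.symm

theorem Lp.ae_eq_of_forall_simpleFunc [MeasurableSpace E] [BorelSpace E] {p q p' q' : ℝ≥0∞}
    [Fact (1 ≤ p)] [Fact (1 ≤ q)] [Fact (1 ≤ p')] [Fact (1 ≤ q')] (hp : p ≠ ∞) (hq : q ≠ ∞)
    {A : Lp E p μ → Lp F p' μ} {B : Lp E q μ → Lp F q' μ} (hA : Continuous A) (hB : Continuous B)
    (hAB : ∀ (f : SimpleFunc α E) (hfp : MemLp f p μ) (hfq : MemLp f q μ),
      A (hfp.toLp f) =ᵐ[μ] B (hfq.toLp f))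
    {x : Lp E p μ} {y : Lp E q μ} (hxy : x =ᵐ[μ] y) : A x =ᵐ[μ] B y := by
  have hx := Lp.stronglyMeasurable x
  have hxq : MemLp x q μ := (Lp.memLp y).ae_eq hxy.symm
  have := hx.separableSpace_range_union_singleton (b := 0)
  set φ : ℕ → SimpleFunc α E := SimpleFunc.approxOn x hx.measurable (range x ∪ {0}) 0 (by simp)
  have hφp n : MemLp (φ n) p μ := SimpleFunc.memLp_approxOn_range hx.measurable (Lp.memLp x) n
  have hφq n : MemLp (φ n) q μ := SimpleFunc.memLp_approxOn_range hx.measurable hxq n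
  have hφx : Tendsto (fun n => (hφp n).toLp (φ n)) atTop (𝓝 x) := by
    simpa only [Lp.toLp_coeFn] using
      SimpleFunc.tendsto_approxOn_range_Lp hp hx.measurable (Lp.memLp x)
  have hφy : Tendsto (fun n => (hφq n).toLp (φ n)) atTop (𝓝 y) := by
    simpa only [Lp.toLp_coeFn, MemLp.toLp_congr hxq (Lp.memLp y) hxy] using
      SimpleFunc.tendsto_approxOn_range_Lp hq hx.measurable hxq
  have hAx := tendstoInMeasure_of_tendsto_Lp ((hA.tendsto x).comp hφx)
  have hBy := tendstoInMeasure_of_tendsto_Lp ((hB.tendsto y).comp hφy)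
  exact tendstoInMeasure_ae_unique (hAx.congr_left fun n => hAB _ _ _) hBy

section Extension

variable {𝕜 : Type*}

noncomputable def LinearMap.toLpOfMemLp [NormedRing 𝕜] [Module 𝕜 F] [IsBoundedSMul 𝕜 F]
    {M : Type*} [AddCommMonoid M] [Module 𝕜 M] {q s : ℝ≥0∞}
    (L : M →ₗ[𝕜] Lp F q μ) (hL : ∀ m, MemLp (L m) s μ) : M →ₗ[𝕜] Lp F s μ where
  toFun m := (hL m).toLp _
  map_add' m m' := by
    rw [← MemLp.toLp_add]
    exact MemLp.toLp_congr _ _ (by rw [map_add]; exact Lp.coeFn_add _ _)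
  map_smul' c m := by
    rw [RingHom.id_apply, ← MemLp.toLp_const_smul]
    exact MemLp.toLp_congr _ _ (by rw [map_smul]; exact Lp.coeFn_smul _ _)

theorem LinearMap.coeFn_toLpOfMemLp [NormedRing 𝕜] [Module 𝕜 F] [IsBoundedSMul 𝕜 F]
    {M : Type*} [AddCommMonoid M] [Module 𝕜 M] {q s : ℝ≥0∞}
    (L : M →ₗ[𝕜] Lp F q μ) (hL : ∀ m, MemLp (L m) s μ) (m : M) :
    L.toLpOfMemLp hL m =ᵐ[μ] L m :=
  MemLp.coeFn_toLp (hL m)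

attribute [local instance] Lp.simpleFunc.module

theorem Lp.exists_extension_of_simpleFunc [NontriviallyNormedField 𝕜] [NormedSpace 𝕜 E]
    [NormedSpace 𝕜 F] [CompleteSpace F] {p q s : ℝ≥0∞} [Fact (1 ≤ s)] (hs : s ≠ ∞)
    (A : Lp E p μ →ₗ[𝕜] Lp F q μ) {K : ℝ} (hK : 0 ≤ K)
    (hA : ∀ (f : SimpleFunc α E) (hfp : MemLp f p μ), MemLp f s μ →
      eLpNorm (A (hfp.toLp f)) s μ ≤ ENNReal.ofReal K * eLpNorm f s μ) :
    ∃ V : Lp E s μ →L[𝕜] Lp F s μ, ‖V‖ ≤ K ∧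
      ∀ (f : SimpleFunc α E) (hfs : MemLp f s μ) (hfp : MemLp f p μ),
        V (hfs.toLp f) =ᵐ[μ] A (hfp.toLp f) := by
  have hs0 : s ≠ 0 := (zero_lt_one.trans_le Fact.out).ne'
  let e : Lp.simpleFunc E s μ →ₗ[𝕜] Lp E s μ := (Lp.simpleFunc.coeToLp α E 𝕜).toLinearMap
  have hmem (x : Lp.simpleFunc E s μ) : MemLp (e x) p μ :=
    (SimpleFunc.memLp_of_memLp hs0 hs (Lp.simpleFunc.memLp x) p).ae_eq
      (Lp.simpleFunc.toSimpleFunc_eq_toFun x)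
  let eₚ := e.toLpOfMemLp hmem
  have heₚ (f : SimpleFunc α E) (hfs : MemLp f s μ) (hfp : MemLp f p μ) :
      eₚ (SimpleFunc.toLp f hfs) = hfp.toLp f :=
    MemLp.toLp_congr (hmem _) hfp (MemLp.coeFn_toLp hfs)
  have hbound (x : Lp.simpleFunc E s μ) :
      eLpNorm (A (eₚ x)) s μ ≤ ENNReal.ofReal K * eLpNorm (e x) s μ := by
    obtain ⟨f, hfs, rfl⟩ : ∃ f hfs, x = SimpleFunc.toLp f hfs :=
      ⟨_, _, (Lp.simpleFunc.toLp_toSimpleFunc x).symm⟩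
    rw [heₚ f hfs (SimpleFunc.memLp_of_memLp hs0 hs hfs p)]
    exact (hA _ _ hfs).trans_eq (congrArg _ (eLpNorm_congr_ae (MemLp.coeFn_toLp hfs)).symm)
  let L := (A ∘ₗ eₚ).toLpOfMemLp fun x => ⟨Lp.aestronglyMeasurable _,
    (hbound x).trans_lt (mul_lt_top ofReal_lt_top (Lp.eLpNorm_lt_top _))⟩
  have hLeₚ (x : Lp.simpleFunc E s μ) : L x =ᵐ[μ] A (eₚ x) := (A ∘ₗ eₚ).coeFn_toLpOfMemLp _ x
  have hL (x : Lp.simpleFunc E s μ) : ‖L x‖ ≤ K * ‖e x‖ := by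
    rw [Lp.norm_def, Lp.norm_def, eLpNorm_congr_ae (hLeₚ x), ← toReal_ofReal hK, ← toReal_mul]
    exact toReal_mono (mul_ne_top ofReal_ne_top (Lp.eLpNorm_ne_top _)) (hbound x)
  have hdense : DenseRange e := Lp.simpleFunc.denseRange hs
  refine ⟨L.extendOfNorm e, LinearMap.opNorm_extendOfNorm_le hdense hK hL,
    fun f hfs hfp => ?_⟩
  rw [← Lp.simpleFunc.toLp_eq_toLp f hfs]
  show L.extendOfNorm e (e (SimpleFunc.toLp f hfs)) =ᵐ[μ] _
  rw [LinearMap.extendOfNorm_eq hdense ⟨K, hL⟩, ← heₚ f hfs hfp]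
  exact hLeₚ _

end Extension

section ConsistentFamily

variable {𝕜 : Type*} [NontriviallyNormedField 𝕜] [NormedSpace 𝕜 E] [NormedSpace 𝕜 F]

theorem Lp.eLpNorm_apply_le_of_opNorm_le {p q : ℝ≥0∞} [Fact (1 ≤ p)] [Fact (1 ≤ q)]
    (A : Lp E p μ →L[𝕜] Lp F q μ) {K : ℝ} (hA : ‖A‖ ≤ K) (x : Lp E p μ) :
    eLpNorm (A x) q μ ≤ ENNReal.ofReal K * eLpNorm x p μ := by
  simpa only [Lp.enorm_def] using
    (A.le_opENorm x).trans (mul_le_mul_left (by rw [← ofReal_norm]; exact ofReal_le_ofReal hA) _)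

theorem eLpNorm_apply_simpleFunc_le_of_consistent {r s : ℝ≥0∞} (hr : 1 ≤ r) (hrs : r < s)
    (hs : s ≠ ∞) {K : ℝ}
    (T : ∀ (p : ℝ≥0∞) [Fact (1 ≤ p)], r < p → p < s → Lp E p μ →L[𝕜] Lp E p μ)
    (hTK : ∀ (p : ℝ≥0∞) [Fact (1 ≤ p)] (hp : r < p) (hps : p < s), ‖T p hp hps‖ ≤ K)
    (hcons : ∀ (p q : ℝ≥0∞) [Fact (1 ≤ p)] [Fact (1 ≤ q)]
        (hp : r < p) (hps : p < s) (hq : r < q) (hqs : q < s)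
        (x : Lp E p μ) (y : Lp E q μ), (x : α → E) =ᵐ[μ] (y : α → E) →
        (T p hp hps x : α → E) =ᵐ[μ] (T q hq hqs y : α → E))
    {p₀ : ℝ≥0∞} [Fact (1 ≤ p₀)] (hp₀ : r < p₀) (hp₀s : p₀ < s) (f : SimpleFunc α E)
    (hfp₀ : MemLp f p₀ μ) (hfs : MemLp f s μ) :
    eLpNorm (T p₀ hp₀ hp₀s (hfp₀.toLp f)) s μ ≤ ENNReal.ofReal K * eLpNorm f s μ := by
  have hs0 : s ≠ 0 := (pos_of_gt hrs).ne'
  refine eLpNorm_le_mul_of_forall_Ioo (one_pos.trans_le hr).ne' hrs hs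
    (Lp.aestronglyMeasurable _) (SimpleFunc.memLp_of_memLp hs0 hs hfs r) hfs ofReal_ne_top
    fun p hp => ?_
  have : Fact (1 ≤ p) := ⟨hr.trans hp.1.le⟩
  have hfp : MemLp f p μ := SimpleFunc.memLp_of_memLp hs0 hs hfs p
  calc eLpNorm (T p₀ hp₀ hp₀s (hfp₀.toLp f)) p μ = eLpNorm (T p hp.1 hp.2 (hfp.toLp f)) p μ :=
        eLpNorm_congr_ae (hcons _ _ _ _ _ _ _ _ (hfp₀.coeFn_toLp_ae_eq_toLp hfp))
    _ ≤ ENNReal.ofReal K * eLpNorm (hfp.toLp f) p μ :=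
        Lp.eLpNorm_apply_le_of_opNorm_le _ (hTK p hp.1 hp.2) _
    _ = ENNReal.ofReal K * eLpNorm f p μ := by rw [eLpNorm_congr_ae hfp.coeFn_toLp]

end ConsistentFamily

end MeasureTheory

theorem stmt9_general {Ω : Type*} [MeasurableSpace Ω] (μ : Measure Ω)
    (r s : ℝ≥0∞) (hr : 1 ≤ r) (hrs : r < s) (hs : s < ∞) (K : ℝ)
    (T : ∀ (p : ℝ≥0∞) [Fact (1 ≤ p)], r < p → p < s → Lp ℂ p μ →L[ℂ] Lp ℂ p μ)
    (hTK : ∀ (p : ℝ≥0∞) [Fact (1 ≤ p)] (hp : r < p) (hps : p < s), ‖T p hp hps‖ ≤ K)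
    (hcons : ∀ (p q : ℝ≥0∞) [Fact (1 ≤ p)] [Fact (1 ≤ q)]
        (hp : r < p) (hps : p < s) (hq : r < q) (hqs : q < s)
        (x : Lp ℂ p μ) (y : Lp ℂ q μ), (x : Ω → ℂ) =ᵐ[μ] (y : Ω → ℂ) →
        (T p hp hps x : Ω → ℂ) =ᵐ[μ] (T q hq hqs y : Ω → ℂ)) :
    haveI : Fact (1 ≤ s) := ⟨hr.trans hrs.le⟩
    ∃ V : Lp ℂ s μ →L[ℂ] Lp ℂ s μ,
      (∀ (p : ℝ≥0∞) [Fact (1 ≤ p)] (hp : r < p) (hps : p < s)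
        (x : Lp ℂ s μ) (y : Lp ℂ p μ), (x : Ω → ℂ) =ᵐ[μ] (y : Ω → ℂ) →
          (V x : Ω → ℂ) =ᵐ[μ] (T p hp hps y : Ω → ℂ)) ∧
      ‖V‖ ≤ K ∧
      ∀ V' : Lp ℂ s μ →L[ℂ] Lp ℂ s μ,
        (∀ (p : ℝ≥0∞) [Fact (1 ≤ p)] (hp : r < p) (hps : p < s)
          (x : Lp ℂ s μ) (y : Lp ℂ p μ), (x : Ω → ℂ) =ᵐ[μ] (y : Ω → ℂ) →
            (V' x : Ω → ℂ) =ᵐ[μ] (T p hp hps y : Ω → ℂ)) → V' = V := by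
  have : Fact (1 ≤ s) := ⟨hr.trans hrs.le⟩
  have hs0 : s ≠ 0 := (pos_of_gt hrs).ne'
  obtain ⟨p₀, hrp₀, hp₀s⟩ := exists_between hrs
  have : Fact (1 ≤ p₀) := ⟨hr.trans hrp₀.le⟩
  have hK : 0 ≤ K := (norm_nonneg _).trans (hTK p₀ hrp₀ hp₀s)
  have hmem (f : SimpleFunc Ω ℂ) (hfs : MemLp f s μ) (p : ℝ≥0∞) : MemLp f p μ :=
    SimpleFunc.memLp_of_memLp hs0 hs.ne hfs p
  obtain ⟨V, hVK, hV⟩ := Lp.exists_extension_of_simpleFunc hs.ne (T p₀ hrp₀ hp₀s).toLinearMap hK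
    fun f hfp₀ hfs =>
      eLpNorm_apply_simpleFunc_le_of_consistent hr hrs hs.ne T hTK hcons hrp₀ hp₀s f hfp₀ hfs
  have hVT (p : ℝ≥0∞) [Fact (1 ≤ p)] (hp : r < p) (hps : p < s) (x : Lp ℂ s μ) (y : Lp ℂ p μ)
      (hxy : (x : Ω → ℂ) =ᵐ[μ] y) : V x =ᵐ[μ] T p hp hps y :=
    Lp.ae_eq_of_forall_simpleFunc hs.ne (hps.trans hs).ne V.continuous (T p hp hps).continuous
      (fun f hfs hfp => (hV f hfs (hmem f hfs p₀)).trans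
        (hcons _ _ _ _ _ _ _ _ ((hmem f hfs p₀).coeFn_toLp_ae_eq_toLp hfp))) hxy
  refine ⟨V, hVT, hVK, fun V' hV' => ContinuousLinearMap.ext fun x => Lp.ext ?_⟩
  refine Lp.ae_eq_of_forall_simpleFunc hs.ne hs.ne V'.continuous V.continuous
    (fun f hfs hfs' => ?_) (ae_eq_refl x)
  have hfp₀ := hmem f hfs p₀
  exact (hV' p₀ hrp₀ hp₀s _ _ (hfs.coeFn_toLp_ae_eq_toLp hfp₀)).trans
    (hVT p₀ hrp₀ hp₀s _ _ (hfs'.coeFn_toLp_ae_eq_toLp hfp₀)).symm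

/-- Let `(Ω, Σ, μ)` be a measure space, `1 ≤ r < s < ∞` and `K > 0`.  If
`(T_p)_{p ∈ (r,s)}` is a consistent family of bounded operators on the complex spaces
`L^p(μ)` with `‖T_p‖ ≤ K` for all `p ∈ (r,s)`, then there is a unique bounded operator `V` on
`L^s(μ)` such that `V x = T_p x` μ-a.e. for every `p ∈ (r,s)` and every
`x ∈ L^s(μ) ∩ L^p(μ)`; moreover `‖V‖ ≤ K`. -/
theorem stmt9 {Ω : Type*} [MeasurableSpace Ω] (μ : Measure Ω)
    (r s : ℝ≥0∞) (hr : 1 ≤ r) (hrs : r < s) (hs : s < ∞) (K : ℝ) (hK : 0 < K)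
    (T : ∀ (p : ℝ≥0∞) [Fact (1 ≤ p)], r < p → p < s → Lp ℂ p μ →L[ℂ] Lp ℂ p μ)
    (hTK : ∀ (p : ℝ≥0∞) [Fact (1 ≤ p)] (hp : r < p) (hps : p < s), ‖T p hp hps‖ ≤ K)
    (hcons : ∀ (p q : ℝ≥0∞) [Fact (1 ≤ p)] [Fact (1 ≤ q)]
        (hp : r < p) (hps : p < s) (hq : r < q) (hqs : q < s)
        (x : Lp ℂ p μ) (y : Lp ℂ q μ), (x : Ω → ℂ) =ᵐ[μ] (y : Ω → ℂ) →
        (T p hp hps x : Ω → ℂ) =ᵐ[μ] (T q hq hqs y : Ω → ℂ)) :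
    haveI : Fact (1 ≤ s) := ⟨hr.trans hrs.le⟩
    ∃ V : Lp ℂ s μ →L[ℂ] Lp ℂ s μ,
      (∀ (p : ℝ≥0∞) [Fact (1 ≤ p)] (hp : r < p) (hps : p < s)
        (x : Lp ℂ s μ) (y : Lp ℂ p μ), (x : Ω → ℂ) =ᵐ[μ] (y : Ω → ℂ) →
          (V x : Ω → ℂ) =ᵐ[μ] (T p hp hps y : Ω → ℂ)) ∧
      ‖V‖ ≤ K ∧
      ∀ V' : Lp ℂ s μ →L[ℂ] Lp ℂ s μ,
        (∀ (p : ℝ≥0∞) [Fact (1 ≤ p)] (hp : r < p) (hps : p < s)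
          (x : Lp ℂ s μ) (y : Lp ℂ p μ), (x : Ω → ℂ) =ᵐ[μ] (y : Ω → ℂ) →
            (V' x : Ω → ℂ) =ᵐ[μ] (T p hp hps y : Ω → ℂ)) → V' = V :=
  stmt9_general μ r s hr hrs hs K T hTK hcons
end

section
/- Let (Ω, Σ, μ) be a finite measure space (μ(Ω) < ∞), let 1 ≤ r < ∞, let A be a normed algebra over ℂ, and let M > 0. Suppose that for each p ∈ [r,∞) there is a map Ψ_p : A → B(L^p(μ)) (bounded operators on the complex space L^p(μ)) that is linear and multiplicative, with ‖Ψ_p(a)‖ ≤ M‖a‖ for all a ∈ A, and that the family is consistent: Ψ_p(a)x = Ψ_q(a)x μ-almost everywhere whenever a ∈ A, p, q ∈ [r,∞), and x ∈ L^p(μ) ∩ L^q(μ). Then (noting that L^∞(μ) ⊆ L^p(μ) for every p since μ is finite) there exists a linear and multiplicative map Ψ_∞ : A → B(L^∞(μ)) such that ‖Ψ_∞(a)‖ ≤ M‖a‖ for all a ∈ A, and Ψ_∞(a)x = Ψ_p(a)x μ-almost everywhere for every a ∈ A, every p ∈ [r,∞), and every x ∈ L^∞(μ). -/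
open MeasureTheory Filter Topology ENNReal

/-!
For `x ∈ L^∞`, consistency makes `Ψ_r(a) x` agree a.e. with `Ψ_n(a) x` for every integer `n ≥ r`,
so `‖Ψ_r(a) x‖_n ≤ M‖a‖ ‖x‖_n ≤ M‖a‖ ‖x‖_∞ μ(Ω)^{1/n}`. By Chebyshev's inequality
`t μ{|f| ≥ t}^{1/n} ≤ ‖f‖_n`, letting `n → ∞` gives `‖Ψ_r(a) x‖_∞ ≤ M‖a‖ ‖x‖_∞`. Thus `Ψ_r(a)`
restricts to a bounded operator `Ψ_∞(a)` on `L^∞ ⊆ L^r`, and since this inclusion is injective,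
linearity and multiplicativity pass from `Ψ_r` to `Ψ_∞`.
-/

namespace MeasureTheory

variable {α E : Type*} [MeasurableSpace α] {μ : Measure α} [NormedAddCommGroup E]

theorem mul_measure_rpow_le_eLpNorm {p : ℝ≥0∞} (hp0 : p ≠ 0) (hpt : p ≠ ∞) {f : α → E}
    (hf : AEStronglyMeasurable f μ) (t : ℝ≥0∞) :
    t * μ {x | t ≤ ‖f x‖ₑ} ^ p.toReal⁻¹ ≤ eLpNorm f p μ := by
  have hp : p.toReal ≠ 0 := (ENNReal.toReal_pos hp0 hpt).ne'
  have hp' : 0 ≤ p.toReal⁻¹ := by positivity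
  have h := ENNReal.rpow_le_rpow (mul_meas_ge_le_pow_eLpNorm' μ hp0 hpt hf t) hp'
  rwa [ENNReal.mul_rpow_of_nonneg _ _ hp', ENNReal.rpow_rpow_inv hp,
    ENNReal.rpow_rpow_inv hp] at h

theorem _root_.ENNReal.tendsto_rpow_inv_natCast {c : ℝ≥0∞} (hc0 : c ≠ 0) (hct : c ≠ ∞) :
    Tendsto (fun n : ℕ => c ^ (n : ℝ)⁻¹) atTop (𝓝 1) := by
  have hc : 0 < c.toReal := ENNReal.toReal_pos hc0 hct
  have h : Tendsto (fun n : ℕ => c.toReal ^ (n : ℝ)⁻¹) atTop (𝓝 1) := by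
    simpa [Function.comp_def] using (Real.continuousAt_const_rpow hc.ne').tendsto.comp
      tendsto_inv_atTop_nhds_zero_nat
  have h' := ENNReal.tendsto_ofReal h
  simp only [← ENNReal.ofReal_rpow_of_pos hc, ENNReal.ofReal_toReal hct, ENNReal.ofReal_one] at h'
  exact h'

section IsFiniteMeasure

variable [IsFiniteMeasure μ]

theorem eLpNorm_top_le_of_eventually_eLpNorm_natCast_le {f : α → E}
    (hf : AEStronglyMeasurable f μ) {C : ℝ≥0∞}
    (h : ∀ᶠ n : ℕ in atTop, eLpNorm f n μ ≤ C * μ Set.univ ^ (n : ℝ)⁻¹) :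
    eLpNorm f ∞ μ ≤ C := by
  by_contra! hC
  obtain ⟨t, hCt, ht⟩ := exists_between hC
  set S := {x | t ≤ ‖f x‖ₑ}
  have hS : μ S ≠ 0 := fun hS0 => by
    refine ht.not_ge (essSup_le_of_ae_le t ?_)
    filter_upwards [measure_eq_zero_iff_ae_notMem.1 hS0] with x hx
    exact (not_le.1 hx).le
  have huniv : μ Set.univ ≠ 0 := fun h0 => hS (measure_mono_null (Set.subset_univ S) h0)
  have hlim : Tendsto (fun n : ℕ => t * μ S ^ (n : ℝ)⁻¹) atTop (𝓝 t) := by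
    simpa using ENNReal.Tendsto.const_mul
      (ENNReal.tendsto_rpow_inv_natCast hS (measure_ne_top μ S)) (Or.inl one_ne_zero)
  have hlimC : Tendsto (fun n : ℕ => C * μ Set.univ ^ (n : ℝ)⁻¹) atTop (𝓝 C) := by
    simpa using ENNReal.Tendsto.const_mul
      (ENNReal.tendsto_rpow_inv_natCast huniv (measure_ne_top μ _)) (Or.inl one_ne_zero)
  refine hCt.not_ge (le_of_tendsto_of_tendsto hlim hlimC ?_)
  filter_upwards [h, eventually_ne_atTop 0] with n hn hn0
  simpa using (mul_measure_rpow_le_eLpNorm (p := n) (by simpa using hn0) (by simp) hf t).trans hn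

theorem eLpNorm_top_le_of_eventually_eLpNorm_natCast_le_mul {f g : α → E}
    (hf : AEStronglyMeasurable f μ) (hg : AEStronglyMeasurable g μ) {K : ℝ≥0∞}
    (h : ∀ᶠ n : ℕ in atTop, eLpNorm f n μ ≤ K * eLpNorm g n μ) :
    eLpNorm f ∞ μ ≤ K * eLpNorm g ∞ μ := by
  refine eLpNorm_top_le_of_eventually_eLpNorm_natCast_le hf ?_
  filter_upwards [h] with n hn
  have hg_le : eLpNorm g n μ ≤ eLpNorm g ∞ μ * μ Set.univ ^ (n : ℝ)⁻¹ := by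
    simpa using eLpNorm_le_eLpNorm_mul_rpow_measure_univ (le_top : (n : ℝ≥0∞) ≤ ∞) hg
  calc eLpNorm f n μ ≤ K * (eLpNorm g ∞ μ * μ Set.univ ^ (n : ℝ)⁻¹) := hn.trans (by gcongr)
    _ = K * eLpNorm g ∞ μ * μ Set.univ ^ (n : ℝ)⁻¹ := (mul_assoc _ _ _).symm

end IsFiniteMeasure

namespace Lp

variable {𝕜 : Type*} [NontriviallyNormedField 𝕜] [NormedSpace 𝕜 E] {p q : ℝ≥0∞}

theorem eLpNorm_apply_le [Fact (1 ≤ p)] (T : Lp E p μ →L[𝕜] Lp E p μ) (f : Lp E p μ) :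
    eLpNorm (T f) p μ ≤ ‖T‖ₑ * eLpNorm f p μ := by
  simpa only [Lp.enorm_def] using T.le_opENorm f

variable [IsFiniteMeasure μ]

variable (𝕜) in
def inclusion (hpq : p ≤ q) : Lp E q μ →ₗ[𝕜] Lp E p μ where
  toFun f := ⟨f, Lp.antitone hpq f.2⟩
  map_add' _ _ := rfl
  map_smul' _ _ := rfl

variable (𝕜) in
theorem inclusion_injective (hpq : p ≤ q) :
    Function.Injective (inclusion 𝕜 (E := E) (μ := μ) hpq) :=
  fun _ _ h => Subtype.ext (congrArg (fun f : Lp E p μ => (f : α →ₘ[μ] E)) h)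

variable [Fact (1 ≤ p)] [Fact (1 ≤ q)] (hpq : p ≤ q)

noncomputable def restrictOperator (T : Lp E p μ →L[𝕜] Lp E p μ) (C : NNReal)
    (hT : ∀ f : Lp E q μ, eLpNorm (T (inclusion 𝕜 hpq f)) q μ ≤ C * eLpNorm f q μ) :
    Lp E q μ →L[𝕜] Lp E q μ :=
  LinearMap.mkContinuous
    { toFun f := ⟨T (inclusion 𝕜 hpq f),
        (hT f).trans_lt (ENNReal.mul_lt_top ENNReal.coe_lt_top (Lp.eLpNorm_lt_top f))⟩
      map_add' f g := Subtype.ext (by simp only [map_add]; rfl)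
      map_smul' c f := Subtype.ext (by simp only [map_smul]; rfl) }
    C fun f => ENNReal.toReal_le_of_le_ofReal (by positivity) ((hT f).trans_eq (by
      rw [ENNReal.ofReal_mul (by positivity), ENNReal.ofReal_coe_nnreal, ← Lp.enorm_def,
        ofReal_norm]))

variable {T S U : Lp E p μ →L[𝕜] Lp E p μ} {C₁ C₂ C₃ : NNReal}
  (hT : ∀ f : Lp E q μ, eLpNorm (T (inclusion 𝕜 hpq f)) q μ ≤ C₁ * eLpNorm f q μ)
  (hS : ∀ f : Lp E q μ, eLpNorm (S (inclusion 𝕜 hpq f)) q μ ≤ C₂ * eLpNorm f q μ)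
  (hU : ∀ f : Lp E q μ, eLpNorm (U (inclusion 𝕜 hpq f)) q μ ≤ C₃ * eLpNorm f q μ)

theorem inclusion_restrictOperator (f : Lp E q μ) :
    inclusion 𝕜 hpq (restrictOperator hpq T C₁ hT f) = T (inclusion 𝕜 hpq f) :=
  rfl

theorem norm_restrictOperator_le : ‖restrictOperator hpq T C₁ hT‖ ≤ C₁ :=
  LinearMap.mkContinuous_norm_le _ C₁.2 _

theorem restrictOperator_add (h : U = T + S) :
    restrictOperator hpq U C₃ hU =
      restrictOperator hpq T C₁ hT + restrictOperator hpq S C₂ hS := by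
  ext1 f
  apply inclusion_injective 𝕜 hpq
  simp only [_root_.add_apply, map_add, inclusion_restrictOperator, h]

theorem restrictOperator_smul (c : 𝕜) (h : U = c • T) :
    restrictOperator hpq U C₃ hU = c • restrictOperator hpq T C₁ hT := by
  ext1 f
  apply inclusion_injective 𝕜 hpq
  simp only [_root_.smul_apply, map_smul, inclusion_restrictOperator, h]

theorem restrictOperator_comp (h : U = T.comp S) :
    restrictOperator hpq U C₃ hU =
      (restrictOperator hpq T C₁ hT).comp (restrictOperator hpq S C₂ hS) := by
  ext1 f
  apply inclusion_injective 𝕜 hpq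
  simp only [ContinuousLinearMap.comp_apply, inclusion_restrictOperator, h]

end Lp

end MeasureTheory

theorem stmt14_general {Ω : Type*} [MeasurableSpace Ω] (μ : Measure Ω) [IsFiniteMeasure μ]
    {A : Type*} [NormedRing A] [NormedAlgebra ℂ A]
    (r : ℝ≥0∞) (hr : 1 ≤ r) (hr' : r < ∞) (M : ℝ)
    (Ψ : ∀ (p : ℝ≥0∞) [Fact (1 ≤ p)], r ≤ p → p < ∞ → A → Lp ℂ p μ →L[ℂ] Lp ℂ p μ)
    (hadd : ∀ (p : ℝ≥0∞) [Fact (1 ≤ p)] (hp : r ≤ p) (hps : p < ∞) (a b : A),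
      Ψ p hp hps (a + b) = Ψ p hp hps a + Ψ p hp hps b)
    (hsmul : ∀ (p : ℝ≥0∞) [Fact (1 ≤ p)] (hp : r ≤ p) (hps : p < ∞) (c : ℂ) (a : A),
      Ψ p hp hps (c • a) = c • Ψ p hp hps a)
    (hmul : ∀ (p : ℝ≥0∞) [Fact (1 ≤ p)] (hp : r ≤ p) (hps : p < ∞) (a b : A),
      Ψ p hp hps (a * b) = (Ψ p hp hps a).comp (Ψ p hp hps b))
    (hbound : ∀ (p : ℝ≥0∞) [Fact (1 ≤ p)] (hp : r ≤ p) (hps : p < ∞) (a : A),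
      ‖Ψ p hp hps a‖ ≤ M * ‖a‖)
    (hcons : ∀ (p q : ℝ≥0∞) [Fact (1 ≤ p)] [Fact (1 ≤ q)]
        (hp : r ≤ p) (hps : p < ∞) (hq : r ≤ q) (hqs : q < ∞) (a : A)
        (x : Lp ℂ p μ) (y : Lp ℂ q μ), (x : Ω → ℂ) =ᵐ[μ] (y : Ω → ℂ) →
        (Ψ p hp hps a x : Ω → ℂ) =ᵐ[μ] (Ψ q hq hqs a y : Ω → ℂ)) :
    ∃ Ψi : A → Lp ℂ ∞ μ →L[ℂ] Lp ℂ ∞ μ,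
      (∀ a b : A, Ψi (a + b) = Ψi a + Ψi b) ∧
      (∀ (c : ℂ) (a : A), Ψi (c • a) = c • Ψi a) ∧
      (∀ a b : A, Ψi (a * b) = (Ψi a).comp (Ψi b)) ∧
      (∀ a : A, ‖Ψi a‖ ≤ M * ‖a‖) ∧
      (∀ (a : A) (p : ℝ≥0∞) [Fact (1 ≤ p)] (hp : r ≤ p) (hps : p < ∞)
        (x : Lp ℂ ∞ μ) (y : Lp ℂ p μ), (x : Ω → ℂ) =ᵐ[μ] (y : Ω → ℂ) →
          (Ψi a x : Ω → ℂ) =ᵐ[μ] (Ψ p hp hps a y : Ω → ℂ)) := by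
  have : Fact (1 ≤ r) := ⟨hr⟩
  set ι := Lp.inclusion ℂ (E := ℂ) (μ := μ) (le_top : r ≤ ∞)
  have hΨ_top : ∀ (a : A) (x : Lp ℂ ∞ μ), eLpNorm (Ψ r le_rfl hr' a (ι x)) ∞ μ ≤
      (M * ‖a‖).toNNReal * eLpNorm x ∞ μ := by
    intro a x
    refine eLpNorm_top_le_of_eventually_eLpNorm_natCast_le_mul (Lp.aestronglyMeasurable _)
      (Lp.aestronglyMeasurable x) ?_
    filter_upwards [ENNReal.tendsto_nat_nhds_top.eventually (eventually_ge_nhds hr')] with n hrn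
    have : Fact (1 ≤ (n : ℝ≥0∞)) := ⟨hr.trans hrn⟩
    let Ψn := Ψ n hrn (natCast_lt_top n) a
    calc eLpNorm (Ψ r le_rfl hr' a (ι x)) n μ = eLpNorm (Ψn (Lp.inclusion ℂ le_top x)) n μ :=
          eLpNorm_congr_ae (hcons _ _ _ _ _ _ a _ _ EventuallyEq.rfl)
      _ ≤ ‖Ψn‖ₑ * eLpNorm x n μ := Lp.eLpNorm_apply_le Ψn _
      _ ≤ (M * ‖a‖).toNNReal * eLpNorm x n μ := by
          gcongr
          rw [← ofReal_norm]
          exact ENNReal.ofReal_le_ofReal (hbound _ _ _ a)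
  refine ⟨fun a => Lp.restrictOperator le_top (Ψ r le_rfl hr' a) _ (hΨ_top a),
    fun a b => Lp.restrictOperator_add _ _ _ _ (hadd r le_rfl hr' a b),
    fun c a => Lp.restrictOperator_smul _ _ _ c (hsmul r le_rfl hr' c a),
    fun a b => Lp.restrictOperator_comp _ _ _ _ (hmul r le_rfl hr' a b),
    fun a => (Lp.norm_restrictOperator_le _ _).trans_eq (Real.coe_toNNReal _ ?_),
    fun a p _ hp hps x y hxy => hcons r p le_rfl hr' hp hps a (ι x) y hxy⟩
  exact (norm_nonneg _).trans (hbound r le_rfl hr' a)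

/-- Let `(Ω, Σ, μ)` be a finite measure space, `1 ≤ r < ∞`, `A` a normed
algebra over `ℂ` and `M > 0`.  If for each `p ∈ [r,∞)` there is a linear multiplicative map
`Ψ_p : A → B(L^p(μ))` with `‖Ψ_p(a)‖ ≤ M‖a‖`, and the family is consistent, then (noting that
`L^∞(μ) ⊆ L^p(μ)` for each `p` since `μ` is finite) there is a linear multiplicative map
`Ψ_∞ : A → B(L^∞(μ))` with `‖Ψ_∞(a)‖ ≤ M‖a‖` and `Ψ_∞(a)x = Ψ_p(a)x` a.e. for all `a`,
all `p ∈ [r,∞)` and all `x ∈ L^∞(μ)`. -/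
theorem stmt14 {Ω : Type*} [MeasurableSpace Ω] (μ : Measure Ω) [IsFiniteMeasure μ]
    {A : Type*} [NormedRing A] [NormedAlgebra ℂ A]
    (r : ℝ≥0∞) (hr : 1 ≤ r) (hr' : r < ∞) (M : ℝ) (hM : 0 < M)
    (Ψ : ∀ (p : ℝ≥0∞) [Fact (1 ≤ p)], r ≤ p → p < ∞ → A → Lp ℂ p μ →L[ℂ] Lp ℂ p μ)
    (hadd : ∀ (p : ℝ≥0∞) [Fact (1 ≤ p)] (hp : r ≤ p) (hps : p < ∞) (a b : A),
      Ψ p hp hps (a + b) = Ψ p hp hps a + Ψ p hp hps b)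
    (hsmul : ∀ (p : ℝ≥0∞) [Fact (1 ≤ p)] (hp : r ≤ p) (hps : p < ∞) (c : ℂ) (a : A),
      Ψ p hp hps (c • a) = c • Ψ p hp hps a)
    (hmul : ∀ (p : ℝ≥0∞) [Fact (1 ≤ p)] (hp : r ≤ p) (hps : p < ∞) (a b : A),
      Ψ p hp hps (a * b) = (Ψ p hp hps a).comp (Ψ p hp hps b))
    (hbound : ∀ (p : ℝ≥0∞) [Fact (1 ≤ p)] (hp : r ≤ p) (hps : p < ∞) (a : A),
      ‖Ψ p hp hps a‖ ≤ M * ‖a‖)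
    (hcons : ∀ (p q : ℝ≥0∞) [Fact (1 ≤ p)] [Fact (1 ≤ q)]
        (hp : r ≤ p) (hps : p < ∞) (hq : r ≤ q) (hqs : q < ∞) (a : A)
        (x : Lp ℂ p μ) (y : Lp ℂ q μ), (x : Ω → ℂ) =ᵐ[μ] (y : Ω → ℂ) →
        (Ψ p hp hps a x : Ω → ℂ) =ᵐ[μ] (Ψ q hq hqs a y : Ω → ℂ)) :
    ∃ Ψi : A → Lp ℂ ∞ μ →L[ℂ] Lp ℂ ∞ μ,
      (∀ a b : A, Ψi (a + b) = Ψi a + Ψi b) ∧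
      (∀ (c : ℂ) (a : A), Ψi (c • a) = c • Ψi a) ∧
      (∀ a b : A, Ψi (a * b) = (Ψi a).comp (Ψi b)) ∧
      (∀ a : A, ‖Ψi a‖ ≤ M * ‖a‖) ∧
      (∀ (a : A) (p : ℝ≥0∞) [Fact (1 ≤ p)] (hp : r ≤ p) (hps : p < ∞)
        (x : Lp ℂ ∞ μ) (y : Lp ℂ p μ), (x : Ω → ℂ) =ᵐ[μ] (y : Ω → ℂ) →
          (Ψi a x : Ω → ℂ) =ᵐ[μ] (Ψ p hp hps a y : Ω → ℂ)) :=
  stmt14_general μ r hr hr' M Ψ hadd hsmul hmul hbound hcons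
end

section
/- Let σ₁ = {0} ∪ {1/n : n = 1, 2, 3, ...}, a compact subset of ℝ, and let T be the bounded operator on ℓ² (square-summable complex sequences indexed by n = 0, 1, 2, ...) defined by (Tx)_0 = 0 and (Tx)_n = x_n/n for n ≥ 1. For every f : ℝ → ℂ of bounded variation on σ₁, the limit ℓ(f) := lim_{n→∞} f(1/n) exists; define operators Φ₁(f) and Φ₂(f) on ℓ² by (Φ₁(f)x)_0 = f(0)x_0, (Φ₂(f)x)_0 = ℓ(f)x_0, and (Φ₁(f)x)_n = (Φ₂(f)x)_n = f(1/n)x_n for n ≥ 1. Then for i = 1, 2: Φ_i(f) is a bounded operator with ‖Φ_i(f)‖ ≤ sup_{t∈σ₁}|f(t)| + var_{σ₁}(f); Φ_i(f+g) = Φ_i(f) + Φ_i(g) and Φ_i(f·g) = Φ_i(f)∘Φ_i(g) for all f, g of bounded variation on σ₁; Φ_i(p) = p(T) for every polynomial p with complex coefficients (p regarded as the function t ↦ p(t) on ℝ); and Φ₁ ≠ Φ₂ (they differ at the indicator function of {0}). -/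
/-!
Both calculi are diagonal operators on `ℓ²`. Multiplication by a bounded sequence is a unital
algebra homomorphism `ℓ^∞ → B(ℓ²)` of norm at most one, and `Φ₁ f` multiplies by the samples
`f (1 / n)`. `Φ₂ f` is `Φ₁` applied to `f` with its value at `0` replaced by the right limit
`ℓ(f) = lim f (1 / n)`, which exists because a function of bounded variation has one-sided
limits; this replacement is additive and multiplicative on such functions, and does nothing to a
polynomial, which is continuous at `0`. The two calculi differ at the indicator of `{0}`, whose
right limit at `0` is `0`.
-/

open MeasureTheory Filter Topology

noncomputable def sigma1 : Set ℝ := {0} ∪ {t : ℝ | ∃ n : ℕ, 1 ≤ n ∧ t = 1 / n}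

open scoped ENNReal lp

namespace lp

section

variable {α 𝕜 : Type*} [RCLike 𝕜] {p : ℝ≥0∞}

theorem norm_infty_mul_apply_le (m : ℓ^∞(α, 𝕜)) (x : lp (fun _ : α => 𝕜) p) (i : α) :
    ‖m i * x i‖ ≤ ‖(‖m‖ • x) i‖ := by
  rw [coeFn_smul, Pi.smul_apply, norm_mul, norm_smul, norm_norm]
  gcongr
  exact norm_apply_le_norm ENNReal.top_ne_zero m i

theorem memℓp_infty_mul (m : ℓ^∞(α, 𝕜)) (x : lp (fun _ : α => 𝕜) p) :
    Memℓp (fun i => m i * x i) p :=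
  (lp.memℓp (‖m‖ • x)).mono' (norm_infty_mul_apply_le m x)

variable [Fact (1 ≤ p)]

theorem norm_infty_mul_le (m : ℓ^∞(α, 𝕜)) (x : lp (fun _ : α => 𝕜) p) :
    ‖(⟨fun i => m i * x i, memℓp_infty_mul m x⟩ : lp (fun _ : α => 𝕜) p)‖ ≤ ‖m‖ * ‖x‖ := by
  have hp : p ≠ 0 := (zero_lt_one.trans_le Fact.out).ne'
  refine (norm_mono hp (norm_infty_mul_apply_le m x)).trans ?_
  rw [norm_const_smul hp, norm_norm]

noncomputable def diagonal :
    ℓ^∞(α, 𝕜) →ₐ[𝕜] lp (fun _ : α => 𝕜) p →L[𝕜] lp (fun _ : α => 𝕜) p where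
  toFun m := LinearMap.mkContinuous
    { toFun x := ⟨fun i => m i * x i, memℓp_infty_mul m x⟩
      map_add' x y := by ext i; exact mul_add (m i) (x i) (y i)
      map_smul' c x := by ext i; exact mul_left_comm (m i) c (x i) }
    ‖m‖ (norm_infty_mul_le m)
  map_one' := by ext x i; exact one_mul (x i)
  map_mul' m n := by ext x i; exact mul_assoc (m i) (n i) (x i)
  map_zero' := by ext x i; exact zero_mul (x i)
  map_add' m n := by ext x i; exact add_mul (m i) (n i) (x i)
  commutes' c := by ext x i; rfl

@[simp]
theorem diagonal_apply_apply (m : ℓ^∞(α, 𝕜)) (x : lp (fun _ : α => 𝕜) p) (i : α) :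
    diagonal (𝕜 := 𝕜) (p := p) m x i = m i * x i :=
  rfl

theorem norm_diagonal_le (m : ℓ^∞(α, 𝕜)) : ‖diagonal (𝕜 := 𝕜) (p := p) m‖ ≤ ‖m‖ :=
  ContinuousLinearMap.opNorm_le_bound _ (norm_nonneg m) (norm_infty_mul_le m)

end

section

variable {α E : Type*} [NormedAddCommGroup E]

open Classical in
/-- The junk value `0` is taken on unbounded sequences. -/
noncomputable def mkInfty (m : α → E) : ℓ^∞(α, E) :=
  if h : Memℓp m ∞ then ⟨m, h⟩ else 0

theorem coeFn_mkInfty {m : α → E} (h : Memℓp m ∞) : ⇑(mkInfty m) = m := by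
  rw [mkInfty, dif_pos h]

@[simp]
theorem mkInfty_coeFn (m : ℓ^∞(α, E)) : mkInfty ⇑m = m :=
  lp.ext (coeFn_mkInfty (lp.memℓp m))

theorem mkInfty_add {m n : α → E} (hm : Memℓp m ∞) (hn : Memℓp n ∞) :
    mkInfty (m + n) = mkInfty m + mkInfty n :=
  lp.ext <| by rw [coeFn_add, coeFn_mkInfty hm, coeFn_mkInfty hn, coeFn_mkInfty (hm.add hn)]

theorem mkInfty_mul {R : Type*} [NormedRing R] {m n : α → R} (hm : Memℓp m ∞) (hn : Memℓp n ∞) :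
    mkInfty (m * n) = mkInfty m * mkInfty n :=
  lp.ext <| by
    rw [infty_coeFn_mul, coeFn_mkInfty hm, coeFn_mkInfty hn, coeFn_mkInfty (hm.infty_mul hn)]

theorem norm_mkInfty_le {m : α → E} {C : ℝ} (hC : 0 ≤ C) (h : ∀ i, ‖m i‖ ≤ C) :
    ‖mkInfty m‖ ≤ C := by
  have hm : Memℓp m ∞ := memℓp_infty ⟨C, Set.forall_mem_range.2 h⟩
  exact norm_le_of_forall_le hC fun i => by rw [coeFn_mkInfty hm]; exact h i

theorem coeFn_aeval_infty {𝕜 : Type*} [NormedField 𝕜] (m : ℓ^∞(α, 𝕜)) (q : Polynomial 𝕜) :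
    ⇑(Polynomial.aeval m q) = fun i => q.eval (m i) := by
  funext i
  have h := Polynomial.aeval_algHom_apply (lpInftySubalgebra 𝕜 (fun _ : α => 𝕜)).val
    (x := (m : lpInftySubalgebra 𝕜 (fun _ : α => 𝕜))) q
  exact (congrFun h i).symm.trans (Polynomial.aeval_pi_apply₂ _ q i)

end

end lp

theorem BoundedVariationOn.bddAbove_norm_image {α E : Type*} [LinearOrder α]
    [SeminormedAddCommGroup E] {f : α → E} {s : Set α} (hf : BoundedVariationOn f s) :
    BddAbove ((‖f ·‖) '' s) := by
  rcases s.eq_empty_or_nonempty with rfl | ⟨x₀, hx₀⟩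
  · simp
  refine ⟨‖f x₀‖ + (eVariationOn f s).toReal, Set.forall_mem_image.2 fun x hx => ?_⟩
  calc ‖f x‖ ≤ ‖f x₀‖ + ‖f x - f x₀‖ := norm_le_insert' _ _
    _ ≤ ‖f x₀‖ + (eVariationOn f s).toReal := by
      rw [← dist_eq_norm]; gcongr; exact hf.dist_le hx hx₀

local notation "ℓ²" => lp (fun _ : ℕ => ℂ) 2

theorem one_div_natCast_mem_sigma1 (n : ℕ) : 1 / (n : ℝ) ∈ sigma1 := by
  rcases Nat.eq_zero_or_pos n with rfl | hn
  · left; simp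
  · exact Or.inr ⟨n, hn, rfl⟩

theorem norm_ofReal_le_one_of_mem_sigma1 {t : ℝ} (ht : t ∈ sigma1) : ‖(t : ℂ)‖ ≤ 1 := by
  rcases ht with rfl | ⟨n, hn, rfl⟩
  · simp
  · rw [Complex.norm_real, Real.norm_eq_abs, abs_of_nonneg (by positivity)]
    exact div_le_one_of_le₀ (by exact_mod_cast hn) n.cast_nonneg

theorem tendsto_one_div_add_one_nhdsWithin_sigma1 :
    Tendsto (fun n : ℕ => 1 / ((n : ℝ) + 1)) atTop (𝓝[sigma1 ∩ Set.Ioi 0] 0) :=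
  tendsto_nhdsWithin_iff.2 ⟨tendsto_one_div_add_atTop_nhds_zero_nat, Eventually.of_forall fun n =>
    ⟨by simpa using one_div_natCast_mem_sigma1 (n + 1), Set.mem_Ioi.2 Nat.one_div_pos_of_nat⟩⟩

noncomputable def sigma1Lim (f : ℝ → ℂ) : ℂ :=
  limUnder atTop fun n : ℕ => f (1 / ((n : ℝ) + 1))

theorem sigma1Lim_eq {f : ℝ → ℂ} {l : ℂ}
    (h : Tendsto (fun n : ℕ => f (1 / ((n : ℝ) + 1))) atTop (𝓝 l)) : sigma1Lim f = l :=
  h.limUnder_eq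

theorem BoundedVariationOn.tendsto_sigma1Lim {f : ℝ → ℂ} (hf : BoundedVariationOn f sigma1) :
    Tendsto (fun n : ℕ => f (1 / ((n : ℝ) + 1))) atTop (𝓝 (sigma1Lim f)) := by
  obtain ⟨l, hl⟩ := hf.exists_tendsto_right 0
  exact tendsto_nhds_limUnder ⟨l, hl.comp tendsto_one_div_add_one_nhdsWithin_sigma1⟩

theorem BoundedVariationOn.norm_sigma1Lim_le {f : ℝ → ℂ} (hf : BoundedVariationOn f sigma1) :
    ‖sigma1Lim f‖ ≤ sSup ((‖f ·‖) '' sigma1) :=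
  le_of_tendsto hf.tendsto_sigma1Lim.norm <| Eventually.of_forall fun n =>
    le_csSup hf.bddAbove_norm_image <|
      Set.mem_image_of_mem _ (by simpa using one_div_natCast_mem_sigma1 (n + 1))

noncomputable def regularizeAtZero (f : ℝ → ℂ) : ℝ → ℂ :=
  Function.update f 0 (sigma1Lim f)

theorem regularizeAtZero_zero (f : ℝ → ℂ) : regularizeAtZero f 0 = sigma1Lim f :=
  Function.update_self ..

theorem regularizeAtZero_one_div {n : ℕ} (hn : n ≠ 0) (f : ℝ → ℂ) :
    regularizeAtZero f (1 / n) = f (1 / n) :=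
  Function.update_of_ne (one_div_ne_zero (Nat.cast_ne_zero.2 hn)) ..

theorem regularizeAtZero_eq_self {f : ℝ → ℂ} (hf : ContinuousAt f 0) : regularizeAtZero f = f := by
  rw [regularizeAtZero, sigma1Lim_eq (hf.tendsto.comp tendsto_one_div_add_atTop_nhds_zero_nat),
    Function.update_eq_self]

theorem BoundedVariationOn.regularizeAtZero_add {f g : ℝ → ℂ} (hf : BoundedVariationOn f sigma1)
    (hg : BoundedVariationOn g sigma1) :
    regularizeAtZero (f + g) = regularizeAtZero f + regularizeAtZero g := by
  rw [regularizeAtZero, sigma1Lim_eq (hf.tendsto_sigma1Lim.add hg.tendsto_sigma1Lim),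
    Function.update_add]
  rfl

theorem BoundedVariationOn.regularizeAtZero_mul {f g : ℝ → ℂ} (hf : BoundedVariationOn f sigma1)
    (hg : BoundedVariationOn g sigma1) :
    regularizeAtZero (f * g) = regularizeAtZero f * regularizeAtZero g := by
  rw [regularizeAtZero, sigma1Lim_eq (hf.tendsto_sigma1Lim.mul hg.tendsto_sigma1Lim),
    Function.update_mul]
  rfl

theorem BoundedVariationOn.norm_regularizeAtZero_le {f : ℝ → ℂ} (hf : BoundedVariationOn f sigma1)
    {t : ℝ} (ht : t ∈ sigma1) : ‖regularizeAtZero f t‖ ≤ sSup ((‖f ·‖) '' sigma1) := by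
  rcases eq_or_ne t 0 with rfl | h
  · rw [regularizeAtZero_zero]; exact hf.norm_sigma1Lim_le
  · rw [regularizeAtZero, Function.update_of_ne h]
    exact le_csSup hf.bddAbove_norm_image (Set.mem_image_of_mem _ ht)

/-- The entry at `n = 0` is `f 0`, since `1 / 0 = 0`. -/
noncomputable def sigma1Calculus (f : ℝ → ℂ) : ℓ² →L[ℂ] ℓ² :=
  lp.diagonal (𝕜 := ℂ) (p := 2) (lp.mkInfty fun n : ℕ => f (1 / n))

section sigma1Calculus

variable {f g : ℝ → ℂ}

theorem memℓp_infty_of_bddAbove_sigma1 (hf : BddAbove ((‖f ·‖) '' sigma1)) :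
    Memℓp (fun n : ℕ => f (1 / n)) ∞ :=
  memℓp_infty <| hf.mono <| Set.range_subset_iff.2 fun n =>
    Set.mem_image_of_mem (‖f ·‖) (one_div_natCast_mem_sigma1 n)

theorem sigma1Calculus_apply (hf : BddAbove ((‖f ·‖) '' sigma1)) (x : ℓ²) (n : ℕ) :
    sigma1Calculus f x n = f (1 / n) * x n := by
  rw [sigma1Calculus, lp.diagonal_apply_apply,
    lp.coeFn_mkInfty (memℓp_infty_of_bddAbove_sigma1 hf)]

theorem sigma1Calculus_add (hf : BddAbove ((‖f ·‖) '' sigma1))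
    (hg : BddAbove ((‖g ·‖) '' sigma1)) :
    sigma1Calculus (f + g) = sigma1Calculus f + sigma1Calculus g := by
  rw [sigma1Calculus, sigma1Calculus, sigma1Calculus, ← map_add,
    ← lp.mkInfty_add (memℓp_infty_of_bddAbove_sigma1 hf) (memℓp_infty_of_bddAbove_sigma1 hg)]
  rfl

theorem sigma1Calculus_mul (hf : BddAbove ((‖f ·‖) '' sigma1))
    (hg : BddAbove ((‖g ·‖) '' sigma1)) :
    sigma1Calculus (f * g) = (sigma1Calculus f).comp (sigma1Calculus g) := by
  rw [sigma1Calculus, sigma1Calculus, sigma1Calculus, ← ContinuousLinearMap.mul_def, ← map_mul,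
    ← lp.mkInfty_mul (memℓp_infty_of_bddAbove_sigma1 hf) (memℓp_infty_of_bddAbove_sigma1 hg)]
  rfl

theorem norm_sigma1Calculus_le {C : ℝ} (hf : ∀ t ∈ sigma1, ‖f t‖ ≤ C) :
    ‖sigma1Calculus f‖ ≤ C :=
  (lp.norm_diagonal_le _).trans <|
    lp.norm_mkInfty_le ((norm_nonneg _).trans (hf _ (one_div_natCast_mem_sigma1 0))) fun n =>
      hf _ (one_div_natCast_mem_sigma1 n)

theorem bddAbove_norm_ofReal_sigma1 : BddAbove ((fun t : ℝ => ‖(t : ℂ)‖) '' sigma1) :=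
  ⟨1, Set.forall_mem_image.2 fun _ => norm_ofReal_le_one_of_mem_sigma1⟩

theorem sigma1Calculus_polynomial (q : Polynomial ℂ) :
    sigma1Calculus (fun t => q.eval (t : ℂ)) = Polynomial.aeval (sigma1Calculus (↑)) q := by
  rw [sigma1Calculus, sigma1Calculus, Polynomial.aeval_algHom_apply, ← lp.mkInfty_coeFn
    (Polynomial.aeval _ q), lp.coeFn_aeval_infty,
    lp.coeFn_mkInfty (memℓp_infty_of_bddAbove_sigma1 bddAbove_norm_ofReal_sigma1)]

end sigma1Calculus

theorem sigma1Calculus_indicator_ne :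
    sigma1Calculus (Set.indicator {0} fun _ => (1 : ℂ)) ≠
      sigma1Calculus (regularizeAtZero (Set.indicator {0} fun _ => (1 : ℂ))) := by
  set ind : ℝ → ℂ := Set.indicator {0} fun _ => 1
  have hlim : sigma1Lim ind = 0 := sigma1Lim_eq <| tendsto_const_nhds.congr fun n =>
    (Set.indicator_of_notMem (Set.mem_singleton_iff.not.2 Nat.one_div_pos_of_nat.ne') _).symm
  have hreg : regularizeAtZero ind = 0 := by
    funext t
    rcases eq_or_ne t 0 with rfl | ht
    · exact (regularizeAtZero_zero ind).trans hlim
    · rw [regularizeAtZero, Function.update_of_ne ht]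
      exact Set.indicator_of_notMem ht _
  have hind : BddAbove ((‖ind ·‖) '' sigma1) :=
    ⟨1, Set.forall_mem_image.2 fun t _ => (norm_indicator_le_norm_self _ _).trans norm_one.le⟩
  intro h
  have h0 := congrArg (fun A : ℓ² →L[ℂ] ℓ² => A (lp.single 2 0 1) 0) h
  rw [hreg, sigma1Calculus_apply hind,
    sigma1Calculus_apply (f := 0) ⟨0, Set.forall_mem_image.2 fun _ _ => by simp⟩] at h0
  simp [ind] at h0

/-- On `ℓ²`, the operator `T` with `(Tx)₀ = 0` and `(Tx)ₙ = xₙ/n` (`n ≥ 1`)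
admits two distinct `BV(σ₁)` functional calculi `Φ₁, Φ₂` extending its polynomial calculus:
for `f` of bounded variation on `σ₁` the limit `ℓ(f) = lim f(1/n)` exists, `Φ₁(f)` acts
diagonally with multiplier `f(0)` at coordinate `0`, `Φ₂(f)` with multiplier `ℓ(f)`, both with
multipliers `f(1/n)` at coordinates `n ≥ 1`; each `Φᵢ(f)` is bounded with
`‖Φᵢ(f)‖ ≤ sup_{σ₁}|f| + var_{σ₁} f`, each `Φᵢ` is additive and multiplicative on functions
of bounded variation on `σ₁` and satisfies `Φᵢ(p) = p(T)` for all polynomials `p`, and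
`Φ₁ ≠ Φ₂` (they differ at the indicator function of `{0}`). -/
theorem stmt16 :
    ∃ T : lp (fun _ : ℕ => ℂ) 2 →L[ℂ] lp (fun _ : ℕ => ℂ) 2,
      (∀ x : lp (fun _ : ℕ => ℂ) 2, (T x) 0 = 0) ∧
      (∀ x : lp (fun _ : ℕ => ℂ) 2, ∀ n : ℕ, 1 ≤ n → (T x) n = x n / n) ∧
      (∀ f : ℝ → ℂ, BoundedVariationOn f sigma1 →
        ∃ l : ℂ, Tendsto (fun n : ℕ => f (1 / ((n : ℝ) + 1))) atTop (𝓝 l)) ∧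
      ∃ Φ₁ Φ₂ : (ℝ → ℂ) → lp (fun _ : ℕ => ℂ) 2 →L[ℂ] lp (fun _ : ℕ => ℂ) 2,
        (∀ f : ℝ → ℂ, BoundedVariationOn f sigma1 → ∀ x : lp (fun _ : ℕ => ℂ) 2,
          (Φ₁ f x) 0 = f 0 * x 0 ∧
          (∀ l : ℂ, Tendsto (fun n : ℕ => f (1 / ((n : ℝ) + 1))) atTop (𝓝 l) →
            (Φ₂ f x) 0 = l * x 0) ∧
          (∀ n : ℕ, 1 ≤ n →
            (Φ₁ f x) n = f (1 / (n : ℝ)) * x n ∧ (Φ₂ f x) n = f (1 / (n : ℝ)) * x n)) ∧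
        (∀ f g : ℝ → ℂ, BoundedVariationOn f sigma1 → BoundedVariationOn g sigma1 →
          Φ₁ (f + g) = Φ₁ f + Φ₁ g ∧ Φ₁ (f * g) = (Φ₁ f).comp (Φ₁ g) ∧
          Φ₂ (f + g) = Φ₂ f + Φ₂ g ∧ Φ₂ (f * g) = (Φ₂ f).comp (Φ₂ g)) ∧
        (∀ f : ℝ → ℂ, BoundedVariationOn f sigma1 →
          ‖Φ₁ f‖ ≤ bvNorm sigma1 f ∧ ‖Φ₂ f‖ ≤ bvNorm sigma1 f) ∧
        (∀ p : Polynomial ℂ,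
          Φ₁ (fun t : ℝ => p.eval (t : ℂ)) = Polynomial.aeval T p ∧
          Φ₂ (fun t : ℝ => p.eval (t : ℂ)) = Polynomial.aeval T p) ∧
        Φ₁ (Set.indicator {0} fun _ => (1 : ℂ)) ≠ Φ₂ (Set.indicator {0} fun _ => (1 : ℂ)) := by
  have hT := bddAbove_norm_ofReal_sigma1
  have hreg {f : ℝ → ℂ} (hf : BoundedVariationOn f sigma1) :
      BddAbove ((‖regularizeAtZero f ·‖) '' sigma1) :=
    ⟨_, Set.forall_mem_image.2 fun _ => hf.norm_regularizeAtZero_le⟩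
  have hsup {f : ℝ → ℂ} : sSup ((‖f ·‖) '' sigma1) ≤ bvNorm sigma1 f :=
    le_add_of_nonneg_right ENNReal.toReal_nonneg
  refine ⟨sigma1Calculus (↑), fun x => by simp [sigma1Calculus_apply hT], fun x n _ => ?_,
    fun f hf => ⟨_, hf.tendsto_sigma1Lim⟩, sigma1Calculus, sigma1Calculus ∘ regularizeAtZero,
    fun f hf x => ⟨?_, fun l hl => ?_, fun n hn => ⟨?_, ?_⟩⟩, fun f g hf hg => ⟨?_, ?_, ?_, ?_⟩,
    fun f hf => ⟨?_, ?_⟩, fun q => ⟨sigma1Calculus_polynomial q, ?_⟩, sigma1Calculus_indicator_ne⟩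
  · rw [sigma1Calculus_apply hT]; push_cast; ring
  · simpa using sigma1Calculus_apply hf.bddAbove_norm_image x 0
  · simpa [regularizeAtZero_zero, sigma1Lim_eq hl] using sigma1Calculus_apply (hreg hf) x 0
  · exact sigma1Calculus_apply hf.bddAbove_norm_image x n
  · rw [Function.comp_apply, sigma1Calculus_apply (hreg hf),
      regularizeAtZero_one_div (Nat.one_le_iff_ne_zero.1 hn)]
  · exact sigma1Calculus_add hf.bddAbove_norm_image hg.bddAbove_norm_image
  · exact sigma1Calculus_mul hf.bddAbove_norm_image hg.bddAbove_norm_image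
  · simp only [Function.comp_apply, hf.regularizeAtZero_add hg]
    exact sigma1Calculus_add (hreg hf) (hreg hg)
  · simp only [Function.comp_apply, hf.regularizeAtZero_mul hg]
    exact sigma1Calculus_mul (hreg hf) (hreg hg)
  · exact (norm_sigma1Calculus_le fun t ht =>
      le_csSup hf.bddAbove_norm_image (Set.mem_image_of_mem _ ht)).trans hsup
  · exact (norm_sigma1Calculus_le fun t => hf.norm_regularizeAtZero_le).trans hsup
  · rw [Function.comp_apply,
      regularizeAtZero_eq_self (f := fun t : ℝ => q.eval (t : ℂ))
        (q.continuous.comp Complex.continuous_ofReal).continuousAt,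
      sigma1Calculus_polynomial]
end
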